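/- Suppose in addition that A is commutative. Then for all α ∈ Σ^ρ, a ∈ Σ^η and x, y ∈ A, the element t_a π(y) t_a* commutes with s_α π(x) s_α*. -/

import Mathlib

open scoped Classical

variable (A : Type*) [NormedRing A] [StarRing A] [CStarRing A] [CompleteSpace A]
  [NormedAlgebra ℂ A] [StarModule ℂ A] [PartialOrder A] [StarOrderedRing A]

/-- A `C*`-symbolic dynamical system `(A, ρ, S)`: a finite family of (central, essential,
faithful) `*`-endomorphisms of a unital `C*`-algebra `A` indexed by a finite alphabet `S`. -/
structure CSDS (S : Type*) [Fintype S] where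
  ρ : S → A →⋆ₙₐ[ℂ] A
  unit_ne_zero : ∀ α, ρ α 1 ≠ 0
  central : ∀ α, ∀ x ∈ Set.center A, ρ α x ∈ Set.center A
  essential : 1 ≤ ∑ α, ρ α 1
  faithful : ∀ x : A, x ≠ 0 → ∃ α, ρ α x ≠ 0

/-- A `C*`-textile dynamical system `(A, ρ, η, Σ^ρ, Σ^η, κ)`. -/
structure CTDS (Sρ Sη : Type*) [Fintype Sρ] [Fintype Sη] where
  rs : CSDS A Sρ
  es : CSDS A Sη
  κ : {p : Sρ × Sη // ∃ x, es.ρ p.2 (rs.ρ p.1 x) ≠ 0} →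
      {q : Sη × Sρ // ∃ x, rs.ρ q.2 (es.ρ q.1 x) ≠ 0}
  κ_bij : Function.Bijective κ
  commrel : ∀ p, ∀ x, es.ρ p.1.2 (rs.ρ p.1.1 x) = rs.ρ (κ p).1.2 (es.ρ (κ p).1.1 x)

variable {A}
variable {Sρ Sη : Type*} [Fintype Sρ] [Fintype Sη]

namespace CTDS

/-- The alphabet `Σ_κ` of the textile system: pairs `(α, b) ∈ Σ^{ρη}`,
identified with quadruples `(α, b, a, β)` with `κ(α,b) = (a,β)`. -/
abbrev SigmaKappa (T : CTDS A Sρ Sη) : Type _ :=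
  {p : Sρ × Sη // ∃ x, T.es.ρ p.2 (T.rs.ρ p.1 x) ≠ 0}

variable (T : CTDS A Sρ Sη)


noncomputable instance (T : CTDS A Sρ Sη) : Fintype T.SigmaKappa := Fintype.ofFinite _

end CTDS

variable {B : Type*} [NormedRing B] [StarRing B] [CStarRing B] [CompleteSpace B]
  [NormedAlgebra ℂ B] [StarModule ℂ B]

/-!
Put `w_{α,b} = s_α t_b`. Inserting `1 = ∑_b t_b t_b*` and `t_b t_b* π(x) = t_b π(η_b x) t_b*` gives
`s_α π(x) s_α* = ∑_b w_{α,b} π(η_b x) w_{α,b}*`, where `w_{α,b} = 0` unless `η_b ∘ ρ_α ≠ 0`.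
Symmetrically `t_a π(y) t_a* = ∑_β (t_a s_β) π(ρ_β y) (t_a s_β)*`, and `κ` rewrites every nonzero
`t_a s_β` as some `w_{α',b}`. Thus both elements are diagonal with respect to the family `w`, whose
members have orthogonal ranges (`w_p* w_q = 0` for `p ≠ q`) and satisfy `w_p* w_p = π(η_b (ρ_α 1))`.
The product of two diagonal elements with entries `f_p`, `g_p` is diagonal with entries
`f_p (w_p* w_p) g_p`, and all of these lie in the commutative algebra `π(A)`.
-/

open Finset

section DiagonalSums

variable {R ι : Type*} [Semiring R] [Star R] {w f g : ι → R}

theorem sum_conj_mul_sum_conj (hw : ∀ i j, i ≠ j → star (w i) * w j = 0) (s₁ s₂ : Finset ι) :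
    (∑ i ∈ s₁, w i * f i * star (w i)) * ∑ j ∈ s₂, w j * g j * star (w j) =
      ∑ i ∈ s₁ ∩ s₂, w i * (f i * (star (w i) * w i) * g i) * star (w i) := by
  rw [sum_mul_sum, ← sum_ite_mem]
  refine sum_congr rfl fun i _ => ?_
  have hterm : ∀ j, w i * f i * star (w i) * (w j * g j * star (w j)) =
      w i * f i * (star (w i) * w j) * g j * star (w j) := fun j => by simp only [mul_assoc]
  split_ifs with hi
  · rw [sum_eq_single_of_mem i hi fun j _ hji => by rw [hterm, hw i j hji.symm]; simp, hterm]
    simp only [mul_assoc]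
  · exact sum_eq_zero fun j hj => by rw [hterm, hw i j (ne_of_mem_of_not_mem hj hi).symm]; simp

theorem commute_sum_conj (hw : ∀ i j, i ≠ j → star (w i) * w j = 0)
    (hf : ∀ i, Commute (f i) (star (w i) * w i)) (hg : ∀ i, Commute (g i) (star (w i) * w i))
    (hfg : ∀ i, Commute (f i) (g i)) (s₁ s₂ : Finset ι) :
    Commute (∑ i ∈ s₁, w i * f i * star (w i)) (∑ i ∈ s₂, w i * g i * star (w i)) := by
  rw [commute_iff_eq, sum_conj_mul_sum_conj hw, sum_conj_mul_sum_conj hw, inter_comm]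
  refine sum_congr rfl fun i _ => ?_
  have hmid : f i * (star (w i) * w i) * g i = g i * (star (w i) * w i) * f i := by
    rw [(hf i).eq, mul_assoc, (hfg i).eq, ← mul_assoc, ← (hg i).eq]
  rw [hmid]

end DiagonalSums

theorem IsStarProjection.mul_eq_zero_of_sum_eq_one {R ι : Type*} [CStarAlgebra R] [PartialOrder R]
    [StarOrderedRing R] [Fintype ι] {p : ι → R} (hp : ∀ i, IsStarProjection (p i))
    (hsum : ∑ i, p i = 1) {i j : ι} (hij : i ≠ j) : p i * p j = 0 := by
  have hle : p j ≤ 1 - p i := by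
    rw [← hsum, ← add_sum_erase _ _ (mem_univ i), add_sub_cancel_left]
    exact single_le_sum (fun k _ => (hp k).nonneg) (mem_erase.mpr ⟨hij.symm, mem_univ j⟩)
  have h := ((hp j).le_iff_mul_eq_right (hp i).one_sub).mp hle
  rwa [sub_mul, one_mul, sub_eq_self] at h

theorem star_mul_eq_zero_of_sum_mul_star_eq_one {ι : Type*} [Fintype ι] {u : ι → B}
    (hu : ∀ i, u i * star (u i) * u i = u i) (hsum : ∑ i, u i * star (u i) = 1) {i j : ι}
    (hij : i ≠ j) : star (u i) * u j = 0 := by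
  let _ : CStarAlgebra B :=
    { ‹NormedRing B›, ‹StarRing B›, ‹CStarRing B›, ‹NormedAlgebra ℂ B›, ‹StarModule ℂ B›,
      ‹CompleteSpace B› with }
  let _ := CStarAlgebra.spectralOrder B
  have := CStarAlgebra.spectralOrderedRing B
  have hproj : ∀ k, IsStarProjection (u k * star (u k)) := fun k =>
    ⟨by rw [IsIdempotentElem, ← mul_assoc, hu], by simp [IsSelfAdjoint, star_mul]⟩
  have hstar : star (u i) * (u i * star (u i)) = star (u i) := by
    simpa only [star_mul, star_star, mul_assoc] using congrArg star (hu i)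
  calc star (u i) * u j = star (u i) * (u i * star (u i)) * (u j * star (u j)) * u j := by
        rw [hstar, mul_assoc, hu]
    _ = 0 := by
        rw [mul_assoc (star (u i)), IsStarProjection.mul_eq_zero_of_sum_eq_one hproj hsum hij,
          mul_zero, zero_mul]

section CovariantRep

variable {A B S : Type*} [Semiring A] [Algebra ℂ A] [Star A] [Semiring B] [Algebra ℂ B]
  [StarRing B] [Fintype S]

/-- The relations `(ρ)` on the generators `s_α`. -/
structure IsCovariantRep (π : A →⋆ₐ[ℂ] B) (ρ : S → A →⋆ₙₐ[ℂ] A) (s : S → B) : Prop where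
  partialIsometry : ∀ α, s α * star (s α) * s α = s α
  sum_mul_star : ∑ α, s α * star (s α) = 1
  commute_mul_star : ∀ x α, Commute (π x) (s α * star (s α))
  star_mul_mul : ∀ x α, star (s α) * π x * s α = π (ρ α x)

namespace IsCovariantRep

variable {π : A →⋆ₐ[ℂ] B} {ρ : S → A →⋆ₙₐ[ℂ] A} {s : S → B}

theorem mul_eq (hs : IsCovariantRep π ρ s) (x : A) (α : S) : π x * s α = s α * π (ρ α x) :=
  calc π x * s α = π x * (s α * star (s α) * s α) := by rw [hs.partialIsometry]
    _ = s α * star (s α) * π x * s α := by rw [← mul_assoc, (hs.commute_mul_star x α).eq]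
    _ = s α * π (ρ α x) := by rw [mul_assoc (s α), mul_assoc (s α), hs.star_mul_mul]

theorem star_mul_eq (hs : IsCovariantRep π ρ s) (x : A) (α : S) :
    star (s α) * π x = π (ρ α x) * star (s α) := by
  have hstar : star (s α) * s α * star (s α) = star (s α) := by
    simpa only [star_mul, star_star, ← mul_assoc] using congrArg star (hs.partialIsometry α)
  calc star (s α) * π x = star (s α) * s α * star (s α) * π x := by rw [hstar]
    _ = star (s α) * (π x * (s α * star (s α))) := by
        rw [(hs.commute_mul_star x α).eq]; simp only [mul_assoc]
    _ = π (ρ α x) * star (s α) := by rw [← mul_assoc, ← mul_assoc, hs.star_mul_mul]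

theorem mul_star_mul_eq (hs : IsCovariantRep π ρ s) (x : A) (α : S) :
    s α * star (s α) * π x = s α * π (ρ α x) * star (s α) := by
  rw [← (hs.commute_mul_star x α).eq, ← mul_assoc, hs.mul_eq]

theorem star_mul_self (hs : IsCovariantRep π ρ s) (α : S) : star (s α) * s α = π (ρ α 1) := by
  simpa only [map_one, mul_one] using hs.star_mul_mul 1 α

theorem star_mul_mul_self (hs : IsCovariantRep π ρ s) {S' : Type*} [Fintype S']
    {η : S' → A →⋆ₙₐ[ℂ] A} {t : S' → B} (ht : IsCovariantRep π η t) (α : S) (b : S') :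
    star (s α * t b) * (s α * t b) = π (η b (ρ α 1)) :=
  calc star (s α * t b) * (s α * t b) = star (t b) * π (ρ α 1) * t b := by
        rw [star_mul, ← hs.star_mul_self]; simp only [mul_assoc]
    _ = π (η b (ρ α 1)) := ht.star_mul_mul _ _

end IsCovariantRep

end CovariantRep

section Textile

variable {A : Type*} [Semiring A] [Algebra ℂ A] [Star A]

/-- The alphabet `Σ^{ρη}`. -/
abbrev ComposablePairs {S T : Type*} (ρ : S → A →⋆ₙₐ[ℂ] A) (η : T → A →⋆ₙₐ[ℂ] A) : Type _ :=
  {p : S × T // ∃ x, η p.2 (ρ p.1 x) ≠ 0}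

theorem sum_filter_composablePairs_fst {M : Type*} [AddCommMonoid M] {ρ : Sρ → A →⋆ₙₐ[ℂ] A}
    {η : Sη → A →⋆ₙₐ[ℂ] A} (F : Sρ × Sη → M) (hF : ∀ p, F p ≠ 0 → ∃ x, η p.2 (ρ p.1 x) ≠ 0)
    (α : Sρ) :
    ∑ p ∈ univ.filter (fun p : ComposablePairs ρ η => p.1.1 = α), F p.1 = ∑ b, F (α, b) := by
  refine sum_bij_ne_zero (fun p _ _ => p.1.2) (fun _ _ _ => mem_univ _) ?_ ?_ ?_
  · rintro ⟨⟨α₁, b₁⟩, _⟩ h₁ _ ⟨⟨α₂, b₂⟩, _⟩ h₂ _ (hb : b₁ = b₂)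
    simp only [mem_filter, mem_univ, true_and] at h₁ h₂
    subst h₁ h₂ hb
    rfl
  · intro b _ hb
    exact ⟨⟨(α, b), hF _ hb⟩, by simp, hb, rfl⟩
  · rintro ⟨⟨α', b⟩, _⟩ h _
    simp only [mem_filter, mem_univ, true_and] at h
    subst h
    rfl

namespace IsCovariantRep

variable {ρ : Sρ → A →⋆ₙₐ[ℂ] A} {η : Sη → A →⋆ₙₐ[ℂ] A}

section CStarRing

variable {B : Type*} [NormedRing B] [StarRing B] [CStarRing B] [NormedAlgebra ℂ B]
  {π : A →⋆ₐ[ℂ] B} {s : Sρ → B} {t : Sη → B}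

theorem mul_eq_zero_of_comp_eq_zero (hs : IsCovariantRep π ρ s) (ht : IsCovariantRep π η t)
    {α : Sρ} {b : Sη} (h : ∀ x, η b (ρ α x) = 0) : s α * t b = 0 := by
  rw [← CStarRing.star_mul_self_eq_zero_iff, hs.star_mul_mul_self ht, h, map_zero]

theorem conj_eq_sum_conj (hs : IsCovariantRep π ρ s) (ht : IsCovariantRep π η t) (α : Sρ)
    (x : A) :
    s α * π x * star (s α) =
      ∑ p ∈ univ.filter (fun p : ComposablePairs ρ η => p.1.1 = α),
        s p.1.1 * t p.1.2 * π (η p.1.2 x) * star (s p.1.1 * t p.1.2) := by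
  rw [sum_filter_composablePairs_fst (fun p => s p.1 * t p.2 * π (η p.2 x) * star (s p.1 * t p.2))]
  · calc s α * π x * star (s α) = ∑ b, s α * (t b * star (t b) * π x) * star (s α) := by
          rw [← sum_mul, ← mul_sum, ← sum_mul, ht.sum_mul_star, one_mul]
      _ = ∑ b, s α * t b * π (η b x) * star (s α * t b) := by
          refine sum_congr rfl fun b _ => ?_
          rw [ht.mul_star_mul_eq, star_mul]
          simp only [mul_assoc]
  · intro p hp
    by_contra hcomp
    exact hp (by rw [hs.mul_eq_zero_of_comp_eq_zero ht (not_exists_not.mp hcomp)]; simp)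

theorem conj_eq_sum_conj_of_equiv (ht : IsCovariantRep π η t) (hs : IsCovariantRep π ρ s)
    (κ : ComposablePairs ρ η ≃ ComposablePairs η ρ)
    (hκ : ∀ p, s p.1.1 * t p.1.2 = t (κ p).1.1 * s (κ p).1.2) (a : Sη) (y : A) :
    t a * π y * star (t a) =
      ∑ p ∈ univ.filter (fun p : ComposablePairs ρ η => (κ p).1.1 = a),
        s p.1.1 * t p.1.2 * π (ρ (κ p).1.2 y) * star (s p.1.1 * t p.1.2) := by
  rw [ht.conj_eq_sum_conj hs a y]
  exact (sum_equiv κ (fun p => by simp) fun p _ => by rw [hκ]).symm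

end CStarRing

variable {π : A →⋆ₐ[ℂ] B} {s : Sρ → B} {t : Sη → B}

theorem star_mul_eq_zero (hs : IsCovariantRep π ρ s) {α β : Sρ} (h : α ≠ β) :
    star (s α) * s β = 0 :=
  star_mul_eq_zero_of_sum_mul_star_eq_one hs.partialIsometry hs.sum_mul_star h

theorem star_mul_mul_eq_zero (hs : IsCovariantRep π ρ s) (ht : IsCovariantRep π η t)
    {p q : Sρ × Sη} (hpq : p ≠ q) : star (s p.1 * t p.2) * (s q.1 * t q.2) = 0 := by
  obtain ⟨α, b⟩ := p
  obtain ⟨α', b'⟩ := q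
  rw [star_mul, mul_assoc, ← mul_assoc (star (s α))]
  by_cases hα : α = α'
  · subst hα
    have hb : b ≠ b' := fun h => hpq (by rw [h])
    rw [hs.star_mul_self, ← mul_assoc, ht.star_mul_eq, mul_assoc, ht.star_mul_eq_zero hb, mul_zero]
  · rw [hs.star_mul_eq_zero hα, zero_mul, mul_zero]

end IsCovariantRep

end Textile

theorem compressions_commute_of_comm_general
    (T : CTDS A Sρ Sη)
    (π : A →⋆ₐ[ℂ] B)
    (s : Sρ → B) (t : Sη → B)
    (hspi : ∀ α, s α * star (s α) * s α = s α)
    (htpi : ∀ a, t a * star (t a) * t a = t a)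
    (hs1 : ∑ β, s β * star (s β) = 1)
    (hs2 : ∀ (x : A) (α : Sρ), π x * (s α * star (s α)) = s α * star (s α) * π x)
    (hs3 : ∀ (x : A) (α : Sρ), star (s α) * π x * s α = π (T.rs.ρ α x))
    (ht1 : ∑ b, t b * star (t b) = 1)
    (ht2 : ∀ (x : A) (a : Sη), π x * (t a * star (t a)) = t a * star (t a) * π x)
    (ht3 : ∀ (x : A) (a : Sη), star (t a) * π x * t a = π (T.es.ρ a x))
    (hst : ∀ p : T.SigmaKappa, s p.1.1 * t p.1.2 = t (T.κ p).1.1 * s (T.κ p).1.2)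
    (hA : ∀ x y : A, x * y = y * x)
    (α : Sρ) (a : Sη) (x y : A) :
    Commute (t a * π y * star (t a)) (s α * π x * star (s α)) := by
  have hs : IsCovariantRep π T.rs.ρ s := ⟨hspi, hs1, hs2, hs3⟩
  have ht : IsCovariantRep π T.es.ρ t := ⟨htpi, ht1, ht2, ht3⟩
  have hcomm : ∀ u v : A, Commute (π u) (π v) := fun u v => by
    rw [commute_iff_eq, ← map_mul, ← map_mul, hA]
  rw [ht.conj_eq_sum_conj_of_equiv hs (Equiv.ofBijective T.κ T.κ_bij) hst a y,
    hs.conj_eq_sum_conj ht α x]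
  refine commute_sum_conj
    (fun p q hpq => hs.star_mul_mul_eq_zero ht (Subtype.val_injective.ne hpq))
    (fun p => ?_) (fun p => ?_) (fun _ => hcomm _ _) _ _
  all_goals rw [hs.star_mul_mul_self ht]; exact hcomm _ _

/-- If `A` is commutative then `t_a π(y) t_a*` commutes with
`s_α π(x) s_α*`. -/
theorem compressions_commute_of_comm
    (T : CTDS A Sρ Sη)
    (π : A →⋆ₐ[ℂ] B) (hπ : Function.Injective π)
    (s : Sρ → B) (t : Sη → B)
    (hspi : ∀ α, s α * star (s α) * s α = s α)
    (htpi : ∀ a, t a * star (t a) * t a = t a)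
    (hs1 : ∑ β, s β * star (s β) = 1)
    (hs2 : ∀ (x : A) (α : Sρ), π x * (s α * star (s α)) = s α * star (s α) * π x)
    (hs3 : ∀ (x : A) (α : Sρ), star (s α) * π x * s α = π (T.rs.ρ α x))
    (ht1 : ∑ b, t b * star (t b) = 1)
    (ht2 : ∀ (x : A) (a : Sη), π x * (t a * star (t a)) = t a * star (t a) * π x)
    (ht3 : ∀ (x : A) (a : Sη), star (t a) * π x * t a = π (T.es.ρ a x))
    (hst : ∀ p : T.SigmaKappa, s p.1.1 * t p.1.2 = t (T.κ p).1.1 * s (T.κ p).1.2)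
    (hA : ∀ x y : A, x * y = y * x)
    (α : Sρ) (a : Sη) (x y : A) :
    Commute (t a * π y * star (t a)) (s α * π x * star (s α)) :=
  compressions_commute_of_comm_general T π s t hspi htpi hs1 hs2 hs3 ht1 ht2 ht3 hst hA α a x y
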